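/- arXiv:math/0001051 — 7 statements merged into one kernel-verified Lean document; each statement's English description precedes it below -/
import Mathlib

section
/- If 𝔟 ≤ non(𝒩), then there exists a set X ⊆ ℝ of cardinality 𝔟 such that for every continuous function F : X → ℝ (X with the subspace topology), the image F''(X) is Lebesgue null. -/
open Filter MeasureTheory

/-- `f ≤* g`: `f n ≤ g n` for all but finitely many `n`. -/
def EvLE (f g : ℕ → ℕ) : Prop := ∀ᶠ n in atTop, f n ≤ g n

/-- The bounding number `𝔟`: the least cardinality of an unbounded family in `ℕ^ℕ`. -/
noncomputable def boundingNumber : Cardinal :=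
  sInf {c : Cardinal |
    ∃ F : Set (ℕ → ℕ), (∀ h : ℕ → ℕ, ∃ f ∈ F, ¬ EvLE f h) ∧ Cardinal.mk F = c}

/-- `non(𝒩)`: the least cardinality of a non Lebesgue-null set of reals. -/
noncomputable def nonNull : Cardinal :=
  sInf {c : Cardinal | ∃ A : Set ℝ, volume A ≠ 0 ∧ Cardinal.mk A = c}

/-!
Fix an unbounded family `{g_α : α < 𝔟}` and replace each `g_α` by a strictly increasing
`f_α` that `≤*`-dominates every `g_β`, `β ≤ α`. Then every `≤*`-bounded part of `S = {f_α}` is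
indexed by an initial segment, so has fewer than `𝔟` elements. Code a strictly increasing `g`
by the real `∑ 3^(-g n)`, and let `X` consist of these codes for `g ∈ S` together with the
countable set `D` of finite sums `∑_{k ∈ s} 3^(-k)`.

If `V ⊇ D` is open, the `g` whose code avoids `V` are bounded pointwise by a single `h`, since
the code of `g` lies within `3^(1 - g m) / 2` of the finite sum over `g '' [0, m)`, a point of `V`.
Hence `X \ V` has fewer than `𝔟 ≤ non(𝒩)` points. For continuous
`F : X → ℝ`, cover the countable set `F '' D` by an open `G` of small measure; then
`F '' X ⊆ G ∪ F '' (X \ V)` for `V` with `F ⁻¹' G = V ∩ X`, and the second part is null.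
-/

open Set Cardinal

theorem EvLE.trans {f g h : ℕ → ℕ} (hfg : EvLE f g) (hgh : EvLE g h) : EvLE f h :=
  (hfg.and hgh).mono fun _ hn => hn.1.trans hn.2

theorem EvLE.of_le {f g : ℕ → ℕ} (hfg : f ≤ g) : EvLE f g :=
  Eventually.of_forall hfg

theorem boundingNumber_le_mk {F : Set (ℕ → ℕ)} (hF : ∀ h, ∃ f ∈ F, ¬ EvLE f h) :
    boundingNumber ≤ #F :=
  csInf_le (OrderBot.bddBelow _) ⟨F, hF, rfl⟩

theorem exists_evLE_of_mk_lt_boundingNumber {F : Set (ℕ → ℕ)} (hF : #F < boundingNumber) :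
    ∃ h, ∀ f ∈ F, EvLE f h := by
  by_contra! hF'
  exact (boundingNumber_le_mk hF').not_gt hF

theorem exists_unbounded_mk_eq_boundingNumber :
    ∃ F : Set (ℕ → ℕ), (∀ h, ∃ f ∈ F, ¬ EvLE f h) ∧ #F = boundingNumber :=
  csInf_mem (s := {c | ∃ F : Set (ℕ → ℕ), (∀ h, ∃ f ∈ F, ¬ EvLE f h) ∧ #F = c}) ⟨_, univ, fun h => ⟨fun n => h n + 1, trivial, fun hle => by
    obtain ⟨n, hn⟩ := Eventually.exists hle
    exact Nat.not_succ_le_self _ hn⟩, rfl⟩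

theorem aleph0_le_boundingNumber : ℵ₀ ≤ boundingNumber := by
  obtain ⟨F, hF, hFcard⟩ := exists_unbounded_mk_eq_boundingNumber
  rw [← hFcard, aleph0_le_mk_iff, infinite_coe_iff]
  intro hfin
  obtain ⟨f, hf, hnot⟩ := hF fun n => hfin.toFinset.sup (· n)
  exact hnot (EvLE.of_le fun n => Finset.le_sup (f := (· n)) (hfin.mem_toFinset.2 hf))

theorem measure_eq_zero_of_mk_lt_nonNull {A : Set ℝ} (hA : #A < nonNull) : volume A = 0 := by
  by_contra hA'
  exact (csInf_le (OrderBot.bddBelow _) ⟨A, hA', rfl⟩ : nonNull ≤ #A).not_gt hA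

def strictMonoMajorant (b : ℕ → ℕ) (n : ℕ) : ℕ :=
  n + (Finset.range (n + 1)).sup b

theorem strictMono_strictMonoMajorant (b : ℕ → ℕ) : StrictMono (strictMonoMajorant b) :=
  strictMono_nat_of_lt_succ fun n => by
    have : (Finset.range (n + 1)).sup b ≤ (Finset.range (n + 1 + 1)).sup b :=
      Finset.sup_mono (Finset.range_subset_range.2 (n + 1).le_succ)
    simp only [strictMonoMajorant]
    omega

theorem le_strictMonoMajorant (b : ℕ → ℕ) (n : ℕ) : b n ≤ strictMonoMajorant b n :=
  (Finset.le_sup (Finset.self_mem_range_succ n)).trans (Nat.le_add_left _ _)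

theorem exists_strictMono_dominating {ι : Type} [LinearOrder ι]
    (hι : ∀ i : ι, #(Iio i) < boundingNumber) (g : ι → ℕ → ℕ) :
    ∃ f : ι → ℕ → ℕ, (∀ i, StrictMono (f i)) ∧ ∀ i j, i ≤ j → EvLE (g i) (f j) := by
  have hbound (j : ι) : ∃ b : ℕ → ℕ, ∀ i < j, EvLE (g i) b := by
    obtain ⟨b, hb⟩ := exists_evLE_of_mk_lt_boundingNumber
      ((mk_range_le (f := fun i : Iio j => g i)).trans_lt (hι j))
    exact ⟨b, fun i hi => hb _ ⟨⟨i, hi⟩, rfl⟩⟩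
  choose b hb using hbound
  refine ⟨fun j => strictMonoMajorant (b j + g j), fun j => strictMono_strictMonoMajorant _,
    fun i j hij => ?_⟩
  have hle := le_strictMonoMajorant (b j + g j)
  rcases hij.lt_or_eq with hij | rfl
  · exact (hb j i hij).trans (EvLE.of_le fun n => (Nat.le_add_right _ _).trans (hle n))
  · exact EvLE.of_le fun n => (Nat.le_add_left _ _).trans (hle n)

theorem exists_strictMono_set_mk_eq_boundingNumber :
    ∃ S : Set (ℕ → ℕ), (∀ g ∈ S, StrictMono g) ∧ #S = boundingNumber ∧
      ∀ h, #{g ∈ S | EvLE g h} < boundingNumber := by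
  obtain ⟨F, hF, hFcard⟩ := exists_unbounded_mk_eq_boundingNumber
  obtain ⟨e⟩ : Nonempty (boundingNumber.ord.ToType ≃ F) :=
    Cardinal.eq.1 (by rw [mk_ord_toType, hFcard])
  have hIio (j : boundingNumber.ord.ToType) : #(Iio j) < boundingNumber := by
    simpa using mk_Iio_lt j
  obtain ⟨f, hfmono, hf⟩ := exists_strictMono_dominating hIio fun i => (e i : ℕ → ℕ)
  have hsmall (h : ℕ → ℕ) : ∃ j, ∀ i, EvLE (f i) h → i < j := by
    obtain ⟨g, hg, hgh⟩ := hF h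
    refine ⟨e.symm ⟨g, hg⟩, fun i hi => lt_of_not_ge fun hji => hgh ?_⟩
    simpa using (hf _ _ hji).trans hi
  refine ⟨range f, forall_mem_range.2 hfmono, le_antisymm ?_ ?_, fun h => ?_⟩
  · exact mk_range_le.trans (mk_ord_toType _).le
  · refine boundingNumber_le_mk fun h => ?_
    obtain ⟨j, hj⟩ := hsmall h
    exact ⟨f j, mem_range_self j, fun hfj => (hj j hfj).false⟩
  · obtain ⟨j, hj⟩ := hsmall h
    calc #{g ∈ range f | EvLE g h} ≤ #(f '' Iio j) := by
          refine mk_le_mk_of_subset ?_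
          rintro _ ⟨⟨i, rfl⟩, hi⟩
          exact mem_image_of_mem f (hj i hi)
      _ ≤ #(Iio j) := mk_image_le
      _ < boundingNumber := hIio j

noncomputable def ternarySum (g : ℕ → ℕ) : ℝ := ∑' n, (3⁻¹ : ℝ) ^ g n

noncomputable def finiteTernarySums : Set ℝ := range fun s : Finset ℕ => ∑ k ∈ s, (3⁻¹ : ℝ) ^ k

theorem countable_finiteTernarySums : finiteTernarySums.Countable := countable_range _

section Ternary

variable {g : ℕ → ℕ} {V : Set ℝ}

theorem summable_ternary (hg : Function.Injective g) : Summable fun n => (3⁻¹ : ℝ) ^ g n :=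
  (summable_geometric_of_lt_one (by norm_num) (by norm_num)).comp_injective hg

theorem dist_prefix_ternarySum_le (hg : StrictMono g) (m : ℕ) :
    dist (∑ i ∈ Finset.range m, (3⁻¹ : ℝ) ^ g i) (ternarySum g) ≤ 3 / 2 * (3⁻¹ : ℝ) ^ g m := by
  have hsum := summable_ternary hg.injective
  have hgeom := summable_geometric_of_lt_one (r := (3⁻¹ : ℝ)) (by norm_num) (by norm_num)
  rw [ternarySum, ← hsum.sum_add_tsum_nat_add m, dist_self_add_right,
    Real.norm_of_nonneg (tsum_nonneg fun _ => by positivity)]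
  calc ∑' n, (3⁻¹ : ℝ) ^ g (n + m) ≤ ∑' n, (3⁻¹ : ℝ) ^ g m * (3⁻¹ : ℝ) ^ n := by
        refine ((summable_nat_add_iff m).2 hsum).tsum_le_tsum (fun n => ?_) (hgeom.mul_left _)
        rw [← pow_add]
        have := hg.add_le_nat n m
        exact pow_le_pow_of_le_one (by norm_num) (by norm_num) (by omega)
    _ = 3 / 2 * (3⁻¹ : ℝ) ^ g m := by
        rw [tsum_mul_left, tsum_geometric_of_lt_one (by norm_num) (by norm_num)]
        ring

theorem exists_bound_of_prefix (hV : IsOpen V) {s : Finset ℕ} (hs : ∑ k ∈ s, (3⁻¹ : ℝ) ^ k ∈ V)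
    (m : ℕ) : ∃ N, ∀ g, StrictMono g → ternarySum g ∉ V → (Finset.range m).image g = s →
      g m ≤ N := by
  obtain ⟨ε, hε, hball⟩ := Metric.isOpen_iff.1 hV _ hs
  obtain ⟨N, hN⟩ := exists_pow_lt_of_lt_one (show (0 : ℝ) < 2 / 3 * ε by positivity)
    (show (3⁻¹ : ℝ) < 1 by norm_num)
  refine ⟨N, fun g hg hgV hgs => le_of_not_gt fun hNm => hgV (hball ?_)⟩
  rw [Metric.mem_ball, dist_comm, ← hgs, Finset.sum_image hg.injective.injOn]
  calc _ ≤ 3 / 2 * (3⁻¹ : ℝ) ^ g m := dist_prefix_ternarySum_le hg m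
    _ ≤ 3 / 2 * (3⁻¹ : ℝ) ^ N :=
        mul_le_mul_of_nonneg_left (pow_le_pow_of_le_one (by norm_num) (by norm_num) hNm.le)
          (by norm_num)
    _ < ε := by linarith

/-- By induction on `m`: a bound on `g m` leaves finitely many possible prefixes
`g '' [0, m]`, and each of them bounds `g (m + 1)` by `exists_bound_of_prefix`. -/
theorem exists_bound_of_ternarySum_notMem (hV : IsOpen V) (hD : finiteTernarySums ⊆ V) :
    ∃ h : ℕ → ℕ, ∀ g, StrictMono g → ternarySum g ∉ V → ∀ n, g n ≤ h n := by
  have hD' (s : Finset ℕ) : ∑ k ∈ s, (3⁻¹ : ℝ) ^ k ∈ V := hD (mem_range_self s)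
  suffices ∀ m, ∃ N, ∀ g, StrictMono g → ternarySum g ∉ V → g m ≤ N by
    choose h hh using this
    exact ⟨h, fun g hg hgV n => hh n g hg hgV⟩
  intro m
  induction m with
  | zero =>
    obtain ⟨N, hN⟩ := exists_bound_of_prefix hV (hD' ∅) 0
    exact ⟨N, fun g hg hgV => hN g hg hgV (by simp)⟩
  | succ m ih =>
    obtain ⟨N, hN⟩ := ih
    choose Ns hNs using fun s => exists_bound_of_prefix hV (hD' s) (m + 1)
    refine ⟨(Finset.range (N + 1)).powerset.sup Ns, fun g hg hgV => ?_⟩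
    have hprefix : (Finset.range (m + 1)).image g ∈ (Finset.range (N + 1)).powerset := by
      simp only [Finset.mem_powerset, Finset.image_subset_iff, Finset.mem_range]
      intro i hi
      have := hg.monotone (Nat.lt_succ_iff.1 hi)
      have := hN g hg hgV
      omega
    exact (hNs _ g hg hgV rfl).trans (Finset.le_sup hprefix)

open Classical in
theorem ternarySum_eq_cantorFunction (hg : Function.Injective g) :
    ternarySum g = cantorFunction 3⁻¹ fun k => decide (k ∈ range g) := by
  rw [cantorFunction, ← hg.tsum_eq]
  · exact tsum_congr fun n => (cantorFunctionAux_true (by simp)).symm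
  · intro k hk
    by_contra hkg
    exact hk (cantorFunctionAux_false (by simpa using hkg))

theorem ternarySum_injOn : InjOn ternarySum {g | StrictMono g} := fun g hg g' hg' hgg' => by
  rw [ternarySum_eq_cantorFunction hg.injective, ternarySum_eq_cantorFunction hg'.injective]
    at hgg'
  have := cantorFunction_injective (by norm_num) (by norm_num) hgg'
  refine (hg.range_inj hg').1 (Set.ext fun k => ?_)
  simpa using congrFun this k

end Ternary

theorem mk_diff_lt_boundingNumber {S : Set (ℕ → ℕ)} (hS : ∀ g ∈ S, StrictMono g)
    (hSsmall : ∀ h, #{g ∈ S | EvLE g h} < boundingNumber) {V : Set ℝ} (hV : IsOpen V)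
    (hD : finiteTernarySums ⊆ V) :
    #((finiteTernarySums ∪ ternarySum '' S) \ V : Set ℝ) < boundingNumber := by
  obtain ⟨h, hh⟩ := exists_bound_of_ternarySum_notMem hV hD
  calc #((finiteTernarySums ∪ ternarySum '' S) \ V : Set ℝ)
      ≤ #(ternarySum '' {g ∈ S | EvLE g h}) := by
        refine mk_le_mk_of_subset ?_
        rintro x ⟨hx | ⟨g, hg, rfl⟩, hxV⟩
        · exact absurd (hD hx) hxV
        · exact ⟨g, ⟨hg, EvLE.of_le (hh g (hS g hg) hxV)⟩, rfl⟩
    _ ≤ _ := mk_image_le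
    _ < _ := hSsmall h

theorem volume_range_eq_zero_of_mk_compl_lt_nonNull {α : Type} [TopologicalSpace α]
    {D : Set α} (hD : D.Countable) (hsmall : ∀ U : Set α, IsOpen U → D ⊆ U → #(Uᶜ : Set α) < nonNull)
    {F : α → ℝ} (hF : Continuous F) : volume (range F) = 0 := by
  refine nonpos_iff_eq_zero.1 (ENNReal.le_of_forall_pos_le_add fun ε hε _ => ?_)
  obtain ⟨G, hDG, hG, hGε⟩ := (F '' D).exists_isOpen_lt_of_lt ε
    (by rw [(hD.image F).measure_zero volume]; exact_mod_cast hε)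
  have hnull : volume (F '' (F ⁻¹' G)ᶜ) = 0 := measure_eq_zero_of_mk_lt_nonNull
    (mk_image_le.trans_lt (hsmall _ (hG.preimage hF) (image_subset_iff.1 hDG)))
  have hcover : range F ⊆ G ∪ F '' (F ⁻¹' G)ᶜ :=
    range_subset_iff.2 fun x => (em (F x ∈ G)).imp id (mem_image_of_mem F)
  calc volume (range F) ≤ volume G + volume (F '' (F ⁻¹' G)ᶜ) :=
        (measure_mono hcover).trans (measure_union_le _ _)
    _ ≤ 0 + ε := by rw [hnull, add_zero, zero_add]; exact hGε.le

theorem stmt1 (h : boundingNumber ≤ nonNull) :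
    ∃ X : Set ℝ, Cardinal.mk X = boundingNumber ∧
      ∀ F : X → ℝ, Continuous F → volume (Set.range F) = 0 := by
  obtain ⟨S, hS, hScard, hSsmall⟩ := exists_strictMono_set_mk_eq_boundingNumber
  have hSimage : #(ternarySum '' S) = boundingNumber := by
    rw [mk_image_eq_of_injOn _ _ (ternarySum_injOn.mono hS), hScard]
  refine ⟨finiteTernarySums ∪ ternarySum '' S, le_antisymm ?_ ?_, fun F hF => ?_⟩
  · calc _ ≤ #finiteTernarySums + #(ternarySum '' S) := mk_union_le _ _
      _ ≤ ℵ₀ + boundingNumber := add_le_add countable_finiteTernarySums.le_aleph0 hSimage.le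
      _ = boundingNumber := add_eq_right aleph0_le_boundingNumber aleph0_le_boundingNumber
  · exact hSimage.symm.le.trans (mk_le_mk_of_subset subset_union_right)
  · refine volume_range_eq_zero_of_mk_compl_lt_nonNull
      (countable_finiteTernarySums.preimage Subtype.val_injective) (fun U hU hDU => ?_) hF
    obtain ⟨V, hV, rfl⟩ := isOpen_induced_iff.1 hU
    have hDV : finiteTernarySums ⊆ V := fun x hx => @hDU ⟨x, Or.inl hx⟩ hx
    calc _ ≤ #((finiteTernarySums ∪ ternarySum '' S) \ V : Set ℝ) :=
          (mk_preimage_of_injective _ _ Subtype.val_injective).trans'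
            (mk_le_mk_of_subset fun x hx => ⟨x.2, hx⟩)
      _ < boundingNumber := mk_diff_lt_boundingNumber hS hSsmall hV hDV
      _ ≤ nonNull := h
end

section
/- Suppose X ⊆ Z contains Q_Z, and F : X → ℕ^ℕ is a function (X with the subspace topology) that is continuous at every point of Q_Z. Then there exists g : ℕ → ℕ such that for every x ∈ X and every n ∈ ℕ, if x(n) > g(n) (i.e. the element x(n) of ℕ∞ is strictly greater than g(n), in particular if x(n) = ∞), then F(x)(n) ≤ g(n). -/
/-- The set `Z ⊆ (ℕ∞)^ℕ` of monotone sequences that are strictly increasing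
while finite. -/
def ZSet : Set (ℕ → ℕ∞) :=
  {f | ∀ n, f n ≤ f (n + 1) ∧ (f n < ⊤ → f n < f (n + 1))}

/-- For a finite sequence `s`, the element `q_s` of `(ℕ∞)^ℕ` extending `s` by `∞`. -/
def qSeq (s : List ℕ) : ℕ → ℕ∞ :=
  fun k => if h : k < s.length then (s.get ⟨k, h⟩ : ℕ∞) else ⊤

/-- The countable dense subset `Q_Z = {q_s : s finite strictly increasing}` of `Z`. -/
def QZ : Set (ℕ → ℕ∞) :=
  {f | ∃ s : List ℕ, List.Pairwise (· < ·) s ∧ f = qSeq s}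

/-!
Continuity of `F` at `q_s` yields a bound `C s n` with `F x n ≤ C s n` whenever `x` extends `s`
and `x |s| > C s n`: a basic neighbourhood of `q_s` fixes finitely many coordinates below `|s|`
and asks for large values at finitely many coordinates above it, which monotonicity of `x`
reduces to a condition on `x |s|`. Iterating `m ↦` (a bound for all `C s n` with entries of `s`
at most `m`) gives `B`, and `g n = B (n + 1)` works: if `x n > B (n + 1)`, let `k` be least with
`x k > B (k + 1)`; the prefix `s` of `x` of length `k` has entries `≤ B k`, so
`x k > B (k + 1) ≥ C s n`.
-/

open Filter Set Topology

lemma ZSet.monotone {x : ℕ → ℕ∞} (hx : x ∈ ZSet) : Monotone x :=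
  monotone_nat_of_le_succ fun n => (hx n).1

lemma ZSet.lt_of_lt {x : ℕ → ℕ∞} (hx : x ∈ ZSet) {i j : ℕ} (hij : i < j) (hi : x i ≠ ⊤) :
    x i < x j := by
  induction j, hij using Nat.le_induction with
  | base => exact (hx i).2 hi.lt_top
  | succ j _ ih => exact ih.trans_le (hx j).1

lemma ZSet.exists_prefix {x : ℕ → ℕ∞} (hx : x ∈ ZSet) {k m : ℕ} (h : ∀ i < k, x i ≤ m) :
    ∃ s : List ℕ, s.Pairwise (· < ·) ∧ s.length = k ∧
      (∀ i (hi : i < s.length), x i = s[i]) ∧ ∀ a ∈ s, a ≤ m := by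
  have hx_coe : ∀ i < k, ((x i).toNat : ℕ∞) = x i := fun i hi =>
    ENat.natCast_toNat (ne_top_of_le_ne_top (ENat.natCast_ne_top m) (h i hi))
  refine ⟨List.ofFn fun i : Fin k => (x i).toNat, ?_, List.length_ofFn, ?_, ?_⟩
  · refine List.pairwise_ofFn.2 fun i j hij => ?_
    have := ZSet.lt_of_lt hx hij (by rw [← hx_coe i i.2]; exact ENat.natCast_ne_top _)
    rwa [← hx_coe i i.2, ← hx_coe j j.2, Nat.cast_lt] at this
  · intro i hi
    rw [List.length_ofFn] at hi
    simp [hx_coe i hi]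
  · simp only [List.mem_ofFn, forall_exists_index]
    rintro _ i rfl
    exact ENat.toNat_le_of_le_natCast (h i i.2)

lemma qSeq_of_lt {s : List ℕ} {i : ℕ} (hi : i < s.length) : qSeq s i = s[i] := by
  simp [qSeq, hi]

lemma qSeq_eq_top_iff {s : List ℕ} {i : ℕ} : qSeq s i = ⊤ ↔ s.length ≤ i := by
  simp [qSeq]

lemma ENat.exists_mem_of_mem_nhds_pi {ι : Type*} {y : ι → ℕ∞} {U : Set (ι → ℕ∞)}
    (hU : U ∈ 𝓝 y) : ∃ C : ℕ, ∀ x : ι → ℕ∞, (∀ i, y i ≠ ⊤ → x i = y i) →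
      (∀ i, y i = ⊤ → (C : ℕ∞) < x i) → x ∈ U := by
  rw [nhds_pi, Filter.mem_pi] at hU
  obtain ⟨I, hI, t, ht, hIU⟩ := hU
  have htop : ∀ i, y i = ⊤ → ∃ a : ℕ, Ioi (a : ℕ∞) ⊆ t i := by
    intro i hi
    obtain ⟨a, ha, hat⟩ := nhds_top_basis.mem_iff.1 (hi ▸ ht i)
    exact ⟨a.toNat, by rwa [ENat.natCast_toNat ha.ne]⟩
  choose! a ha using htop
  obtain ⟨C, hC⟩ := (hI.image a).bddAbove
  refine ⟨C, fun x hfin hinf => hIU fun i hiI => ?_⟩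
  by_cases hi : y i = ⊤
  · exact ha i hi (lt_of_le_of_lt (by exact_mod_cast hC (mem_image_of_mem a hiI)) (hinf i hi))
  · exact hfin i hi ▸ mem_of_mem_nhds (ht i)

lemma exists_mem_of_mem_nhds_qSeq {s : List ℕ} {U : Set (ℕ → ℕ∞)} (hU : U ∈ 𝓝 (qSeq s)) :
    ∃ C : ℕ, ∀ x : ℕ → ℕ∞, Monotone x → (∀ i (hi : i < s.length), x i = s[i]) →
      (C : ℕ∞) < x s.length → x ∈ U := by
  obtain ⟨C, hC⟩ := ENat.exists_mem_of_mem_nhds_pi hU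
  refine ⟨C, fun x hx hpre hlen => hC x (fun i hi => ?_) (fun i hi => ?_)⟩
  · have hi' : i < s.length := not_le.1 (mt qSeq_eq_top_iff.2 hi)
    rw [hpre i hi', qSeq_of_lt hi']
  · exact hlen.trans_le (hx (qSeq_eq_top_iff.1 hi))

lemma exists_bound_of_continuousAt_qSeq {X : Set (ℕ → ℕ∞)} {F : X → ℕ → ℕ} {s : List ℕ}
    (hq : qSeq s ∈ X) (hF : ContinuousAt F ⟨qSeq s, hq⟩) (n : ℕ) :
    ∃ C : ℕ, ∀ x : X, Monotone (x : ℕ → ℕ∞) → (∀ i (hi : i < s.length), (x : ℕ → ℕ∞) i = s[i]) →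
      (C : ℕ∞) < (x : ℕ → ℕ∞) s.length → F x n ≤ C := by
  have hFn : ∀ᶠ z in 𝓝 ⟨qSeq s, hq⟩, F z n = F ⟨qSeq s, hq⟩ n := by
    have := (continuous_apply n).continuousAt.comp hF
    rwa [ContinuousAt, nhds_discrete ℕ, tendsto_pure] at this
  obtain ⟨U, hU, hUF⟩ := (mem_nhds_subtype X _ _).1 hFn
  obtain ⟨C, hC⟩ := exists_mem_of_mem_nhds_qSeq hU
  refine ⟨max C (F ⟨qSeq s, hq⟩ n), fun x hx hpre hlen => ?_⟩
  rw [hUF (hC x hx hpre (lt_of_le_of_lt (by exact_mod_cast le_max_left _ _) hlen))]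
  exact le_max_right _ _

/-- Strictly increasing lists with entries `≤ m` are sublists of `List.range (m + 1)`, so summing
`h` over those sublists bounds `h` on all of them. -/
def iterBound (h : List ℕ → ℕ) : ℕ → ℕ
  | 0 => 0
  | j + 1 => iterBound h j + 1 + ((List.range (iterBound h j + 1)).sublists.map h).sum

lemma iterBound_mono (h : List ℕ → ℕ) : Monotone (iterBound h) :=
  monotone_nat_of_le_succ fun j => by simp only [iterBound]; omega

lemma le_iterBound_succ (h : List ℕ → ℕ) {s : List ℕ} (hs : s.Pairwise (· < ·)) {j : ℕ}
    (hle : ∀ a ∈ s, a ≤ iterBound h j) : h s ≤ iterBound h (j + 1) := by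
  have hsub : s.Sublist (List.range (iterBound h j + 1)) :=
    List.sublist_of_subperm_of_pairwise
      (List.subperm_of_subset hs.nodup fun a ha => List.mem_range.2 (Nat.lt_succ_of_le (hle a ha)))
      hs List.pairwise_lt_range
  have := List.single_le_sum (fun _ _ => Nat.zero_le _) _
    (List.mem_map_of_mem (f := h) (List.mem_sublists.2 hsub))
  simp only [iterBound]
  omega

lemma Monotone.exists_first_lt {α : Type*} [LinearOrder α] {B x : ℕ → α} (hB : Monotone B)
    {n : ℕ} (hn : B (n + 1) < x n) : ∃ k ≤ n, B (k + 1) < x k ∧ ∀ i < k, x i ≤ B k := by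
  have hP : ∃ k, B (k + 1) < x k := ⟨n, hn⟩
  refine ⟨Nat.find hP, Nat.find_le hn, Nat.find_spec hP, fun i hi => ?_⟩
  exact (not_lt.1 (Nat.find_min hP hi)).trans (hB hi)

theorem stmt3 (X : Set (ℕ → ℕ∞)) (hXZ : X ⊆ ZSet) (hQX : QZ ⊆ X)
    (F : X → (ℕ → ℕ)) (hF : ∀ q : X, (q : ℕ → ℕ∞) ∈ QZ → ContinuousAt F q) :
    ∃ g : ℕ → ℕ, ∀ x : X, ∀ n : ℕ, (g n : ℕ∞) < (x : ℕ → ℕ∞) n → F x n ≤ g n := by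
  have key : ∀ (s : List ℕ) (n : ℕ), ∃ C : ℕ, s.Pairwise (· < ·) → ∀ x : X,
      (∀ i (hi : i < s.length), (x : ℕ → ℕ∞) i = s[i]) →
      (C : ℕ∞) < (x : ℕ → ℕ∞) s.length → F x n ≤ C := by
    intro s n
    by_cases hs : s.Pairwise (· < ·)
    · obtain ⟨C, hC⟩ :=
        exists_bound_of_continuousAt_qSeq (hQX ⟨s, hs, rfl⟩) (hF _ ⟨s, hs, rfl⟩) n
      exact ⟨C, fun _ x => hC x (ZSet.monotone (hXZ x.2))⟩
    · exact ⟨0, fun h => absurd h hs⟩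
  choose C hC using key
  refine ⟨fun n => iterBound (C · n) (n + 1), fun x n hxn => ?_⟩
  obtain ⟨k, hkn, hk, hprefix⟩ :=
    Monotone.exists_first_lt (B := fun j => (iterBound (C · n) j : ℕ∞))
      (Nat.mono_cast.comp (iterBound_mono _)) hxn
  obtain ⟨s, hs, rfl, hxs, hsB⟩ := ZSet.exists_prefix (hXZ x.2) hprefix
  have hCs := le_iterBound_succ (C · n) hs hsB
  calc F x n ≤ C s n := hC s n hs x hxs (lt_of_le_of_lt (by exact_mod_cast hCs) hk)
    _ ≤ iterBound (C · n) (s.length + 1) := hCs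
    _ ≤ iterBound (C · n) (n + 1) := iterBound_mono _ (by omega)
end

section
/- For every open set U ⊆ (ℕ∞)^ℕ with Q_Z ⊆ U there exists g : ℕ → ℕ such that every strictly increasing function f : ℕ → ℕ (viewed as an element of (ℕ∞)^ℕ via the inclusion ℕ ⊆ ℕ∞) which does not belong to U satisfies f(n) ≤ g(n) for all n ∈ ℕ. Equivalently, every strictly increasing f : ℕ → ℕ with f(n) > g(n) for at least one n belongs to U. -/
/-!
Each `q_s ∈ Q_Z` has a basic neighbourhood inside `U` that fixes the first `|s|` coordinates and
asks finitely many of the others to exceed some bound `M s`; so a strictly increasing `f` with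
prefix `s` lies in `U` as soon as `f |s| > M s`. Define `g` recursively so that `g n` dominates
`M s` for every `s` of length `n` with entries at most `g (n - 1)`. If `f ∉ U` and `n` is least with
`f n > g n`, then `s = (f 0, …, f (n-1))` is such a prefix and `f n > g n ≥ M s` puts `f` in `U`.
-/

open Filter Topology

theorem ENat.exists_forall_mem_of_mem_nhds_pi {ι : Type*} {q : ι → ℕ∞} {U : Set (ι → ℕ∞)}
    (hU : U ∈ 𝓝 q) :
    ∃ m : ℕ, ∀ x : ι → ℕ∞, (∀ i, q i ≠ ⊤ → x i = q i) → (∀ i, q i = ⊤ → (m : ℕ∞) < x i) →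
      x ∈ U := by
  rw [nhds_pi, mem_pi] at hU
  obtain ⟨I, hI, V, hV, hVU⟩ := hU
  have hVtop : ∀ i, ∃ k : ℕ, q i = ⊤ → Set.Ioi (k : ℕ∞) ⊆ V i := by
    intro i
    by_cases hi : q i = ⊤
    · obtain ⟨a, ha, haV⟩ := nhds_top_basis.mem_iff.mp (hi ▸ hV i)
      obtain ⟨k, rfl⟩ := ENat.ne_top_iff_exists.mp ha.ne
      exact ⟨k, fun _ => haV⟩
    · exact ⟨0, fun h => absurd h hi⟩
  choose k hk using hVtop
  refine ⟨hI.toFinset.sup k, fun x hfin htop => hVU fun i hiI => ?_⟩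
  by_cases hi : q i = ⊤
  · refine hk i hi (lt_of_le_of_lt ?_ (htop i hi))
    exact_mod_cast Finset.le_sup (hI.mem_toFinset.mpr hiI)
  · exact (hfin i hi).symm ▸ mem_of_mem_nhds (hV i)

theorem exists_forall_mem_of_qSeq_mem {U : Set (ℕ → ℕ∞)} (hU : IsOpen U) {s : List ℕ}
    (hs : qSeq s ∈ U) :
    ∃ m : ℕ, ∀ f : ℕ → ℕ, StrictMono f → (∀ k (hk : k < s.length), f k = s[k]) →
      m < f s.length → (fun n => (f n : ℕ∞)) ∈ U := by
  obtain ⟨m, hm⟩ := ENat.exists_forall_mem_of_mem_nhds_pi (hU.mem_nhds hs)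
  refine ⟨m, fun f hf hfs hmf => hm _ (fun i hi => ?_) (fun i hi => ?_)⟩
  · have hlt : i < s.length := by
      by_contra h
      exact hi (by simp [qSeq, h])
    simp [qSeq, hlt, hfs i hlt]
  · have hle : s.length ≤ i := by
      by_contra h
      simp [qSeq, not_le.mp h] at hi
    exact_mod_cast hmf.trans_le (hf.monotone hle)

def prefixBound (M : List ℕ → ℕ) : ℕ → ℕ
  | 0 => M []
  | n + 1 => max (prefixBound M n) (Finset.univ.sup
      fun v : Fin (n + 1) → Fin (prefixBound M n + 1) => M (List.ofFn fun i => (v i : ℕ)))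

theorem monotone_prefixBound (M : List ℕ → ℕ) : Monotone (prefixBound M) :=
  monotone_nat_of_le_succ fun _ => le_max_left _ _

theorem le_prefixBound (M : List ℕ → ℕ) {f : ℕ → ℕ} {n : ℕ}
    (hf : ∀ k < n, f k ≤ prefixBound M k) :
    M (List.ofFn fun i : Fin n => f i) ≤ prefixBound M n := by
  cases n with
  | zero => simp [prefixBound]
  | succ n =>
    have hbound (i : Fin (n + 1)) : f i < prefixBound M n + 1 :=
      Nat.lt_succ_of_le ((hf i i.2).trans (monotone_prefixBound M (Nat.le_of_lt_succ i.2)))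
    exact le_max_of_le_right <| Finset.le_sup
      (f := fun v : Fin (n + 1) → Fin (prefixBound M n + 1) => M (List.ofFn fun i => (v i : ℕ)))
      (Finset.mem_univ fun i => ⟨f i, hbound i⟩)

theorem stmt4 (U : Set (ℕ → ℕ∞)) (hU : IsOpen U) (hQU : QZ ⊆ U) :
    ∃ g : ℕ → ℕ, ∀ f : ℕ → ℕ, StrictMono f →
      (fun n => (f n : ℕ∞)) ∉ U → ∀ n, f n ≤ g n := by
  choose! M hM using fun s (hs : s.Pairwise (· < ·)) =>
    exists_forall_mem_of_qSeq_mem hU (hQU ⟨s, hs, rfl⟩)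
  refine ⟨prefixBound M, fun f hf hfU n => ?_⟩
  induction n using Nat.strong_induction_on with
  | _ n ih =>
    set s : List ℕ := List.ofFn fun i : Fin n => f i
    have hs : s.Pairwise (· < ·) := List.pairwise_ofFn.mpr fun _ _ hij => hf hij
    by_contra! hn
    refine hfU (hM s hs f hf (fun k hk => by simp [s]) ?_)
    simpa [s] using (le_prefixBound M ih).trans_lt hn
end

section
/- The set Z is a nonempty compact subset of (ℕ∞)^ℕ, and Z (with the subspace topology) is homeomorphic to the Cantor space 2^ℕ (the space of functions ℕ → {0,1} with the product topology). -/
open Classical in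
/-- The indicator of the range of `f` among naturals. -/
noncomputable def toBoolSeq (f : ℕ → ℕ∞) : ℕ → Bool :=
  fun k => decide (∃ n, f n = (k : ℕ∞))

lemma toBoolSeq_eq_true_iff (f : ℕ → ℕ∞) (k : ℕ) :
    toBoolSeq f k = true ↔ ∃ n, f n = (k : ℕ∞) := by
  simp [toBoolSeq]

lemma mem_ZSet_iff (f : ℕ → ℕ∞) : f ∈ ZSet ↔ ∀ n, f n + 1 ≤ f (n + 1) := by
  constructor
  · intro hf n
    rcases eq_or_ne (f n) ⊤ with h | h
    · have : f n ≤ f (n+1) := (hf n).1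
      rw [h] at this ⊢
      simpa using this
    · exact (ENat.add_one_le_iff h).2 ((hf n).2 (lt_top_iff_ne_top.mpr h))
  · intro hf n
    rcases eq_or_ne (f n) ⊤ with h | h
    · have := hf n
      rw [h] at this ⊢
      simp only [top_add] at this
      exact ⟨this, fun hc => absurd hc (lt_irrefl _)⟩
    · have := (ENat.add_one_le_iff h).1 (hf n)
      exact ⟨this.le, fun _ => this⟩

namespace ZSetAux

variable {f : ℕ → ℕ∞}

lemma mono (hf : f ∈ ZSet) : Monotone f :=
  monotone_nat_of_le_succ fun n => (hf n).1

lemma strict (hf : f ∈ ZSet) {m n : ℕ} (h : m < n) (hm : f m ≠ ⊤) : f m < f n :=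
  lt_of_lt_of_le ((hf m).2 (lt_top_iff_ne_top.mpr hm)) (mono hf h)

lemma self_le (hf : f ∈ ZSet) : ∀ n : ℕ, (n : ℕ∞) ≤ f n := by
  intro n
  induction n with
  | zero => simp
  | succ n ih =>
    have h := (mem_ZSet_iff f).1 hf n
    calc ((n+1 : ℕ) : ℕ∞) = (n : ℕ∞) + 1 := by push_cast; ring
    _ ≤ f n + 1 := by gcongr
    _ ≤ f (n+1) := h

/-- If `f n = k` then `n ≤ k`. -/
lemma index_le (hf : f ∈ ZSet) {n k : ℕ} (h : f n = (k : ℕ∞)) : n ≤ k := by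
  have := self_le hf n
  rw [h] at this
  exact_mod_cast this

/-- The counting lemma: if `f n = k` then there are exactly `n` members of the
range of `f` below `k`. -/
lemma count_eq (hf : f ∈ ZSet) {n k : ℕ} (h : f n = (k : ℕ∞)) :
    ((Finset.range k).filter fun j => toBoolSeq f j = true).card = n := by
  classical
  have himg : ((Finset.range k).filter fun j => toBoolSeq f j = true)
      = (Finset.range n).image fun m => (f m).toNat := by
    ext j
    simp only [Finset.mem_filter, Finset.mem_range, Finset.mem_image,
      toBoolSeq_eq_true_iff]
    constructor
    · rintro ⟨hjk, m, hm⟩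
      refine ⟨m, ?_, by rw [hm]; simp⟩
      by_contra hmn
      push_neg at hmn
      have : f n ≤ f m := mono hf hmn
      rw [h, hm] at this
      exact absurd (Nat.cast_le.mp this) (by omega)
    · rintro ⟨m, hmn, hm⟩
      have hfm_lt : f m < f n := by
        apply strict hf hmn
        intro htop
        have : f m ≤ f n := mono hf hmn.le
        rw [htop, h] at this
        simp at this
      have hfm_ne : f m ≠ ⊤ := by
        rw [h] at hfm_lt
        exact (hfm_lt.trans (WithTop.coe_lt_top k)).ne
      obtain ⟨j', hj'⟩ := WithTop.ne_top_iff_exists.mp hfm_ne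
      have hj'2 : f m = (j' : ℕ∞) := hj'.symm
      subst hm
      rw [hj'2] at hfm_lt ⊢
      rw [h] at hfm_lt
      simp only [ENat.toNat_coe]
      exact ⟨Nat.cast_lt.mp hfm_lt, m, hj'2⟩
  rw [himg, Finset.card_image_of_injOn, Finset.card_range]
  have key : ∀ a b : ℕ, a < n → b < n → a < b → (f a).toNat ≠ (f b).toNat := by
    intro a b ha hb hlt hab
    have hne_top : f a ≠ ⊤ := by
      intro htop
      have : f a ≤ f n := mono hf ha.le
      rw [htop, h] at this
      simp at this
    have hbne_top : f b ≠ ⊤ := by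
      intro htop
      have : f b ≤ f n := mono hf hb.le
      rw [htop, h] at this
      simp at this
    have hlt2 := strict hf hlt hne_top
    rw [← ENat.coe_toNat hne_top, ← ENat.coe_toNat hbne_top, Nat.cast_lt] at hlt2
    omega
  intro a ha b hb hab
  simp only [Finset.coe_range, Set.mem_Iio] at ha hb
  simp only at hab
  rcases lt_trichotomy a b with hlt | heq | hgt
  · exact absurd hab (key a b ha hb hlt)
  · exact heq
  · exact absurd hab.symm (key b a hb ha hgt)

/-- Values are determined by the boolean sequence. -/
lemma val_determined {f g : ℕ → ℕ∞} (hf : f ∈ ZSet) (hg : g ∈ ZSet)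
    (h : toBoolSeq f = toBoolSeq g) {n k : ℕ} (hfn : f n = (k : ℕ∞)) :
    g n = (k : ℕ∞) := by
  have h1 : toBoolSeq f k = true := (toBoolSeq_eq_true_iff f k).2 ⟨n, hfn⟩
  rw [h] at h1
  obtain ⟨m, hm⟩ := (toBoolSeq_eq_true_iff g k).1 h1
  have c1 := count_eq hf hfn
  have c2 := count_eq hg hm
  rw [h] at c1
  rw [c2] at c1
  rwa [c1] at hm

lemma inj : Set.InjOn toBoolSeq ZSet := by
  intro f hf g hg h
  funext n
  rcases eq_or_ne (f n) ⊤ with hft | hft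
  · rcases eq_or_ne (g n) ⊤ with hgt | hgt
    · rw [hft, hgt]
    · obtain ⟨k, hk⟩ := WithTop.ne_top_iff_exists.mp hgt
      have := val_determined hg hf h.symm hk.symm
      rw [hft] at this
      exact absurd this.symm (by simp)
  · obtain ⟨k, hk⟩ := WithTop.ne_top_iff_exists.mp hft
    rw [← hk]
    exact (val_determined hf hg h hk.symm).symm

end ZSetAux

open Classical in
/-- The least element of `g` strictly above `x`, or `⊤`. -/
noncomputable def nextE (g : ℕ → Bool) (x : ℕ∞) : ℕ∞ :=
  if h : ∃ k : ℕ, x < (k : ℕ∞) ∧ g k = true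
  then ((sInf {k : ℕ | x < (k : ℕ∞) ∧ g k = true} : ℕ) : ℕ∞) else ⊤

open Classical in
/-- The increasing enumeration of `{k | g k}`, padded with `⊤`. -/
noncomputable def seqOf (g : ℕ → Bool) : ℕ → ℕ∞
  | 0 => if h : ∃ k : ℕ, g k = true
      then ((sInf {k : ℕ | g k = true} : ℕ) : ℕ∞) else ⊤
  | n + 1 => nextE g (seqOf g n)

lemma nextE_cases (g : ℕ → Bool) (x : ℕ∞) :
    nextE g x = ⊤ ∨ (x < nextE g x ∧ ∃ k : ℕ, nextE g x = (k : ℕ∞) ∧ g k = true) := by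
  classical
  unfold nextE
  split
  · next h =>
    right
    have hmem := Nat.sInf_mem (show {k : ℕ | x < (k : ℕ∞) ∧ g k = true}.Nonempty from h)
    exact ⟨hmem.1, _, rfl, hmem.2⟩
  · exact Or.inl rfl

lemma seqOf_mem (g : ℕ → Bool) : seqOf g ∈ ZSet := by
  intro n
  rcases nextE_cases g (seqOf g n) with h | ⟨h1, _⟩
  · constructor
    · show seqOf g n ≤ nextE g (seqOf g n); rw [h]; exact le_top
    · intro hlt
      show seqOf g n < nextE g (seqOf g n); rw [h]; exact hlt
  · exact ⟨le_of_lt h1, fun _ => h1⟩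

lemma seqOf_spec (g : ℕ → Bool) {n k : ℕ} (h : seqOf g n = (k : ℕ∞)) : g k = true := by
  cases n with
  | zero =>
    rw [seqOf] at h
    split at h
    · next hne =>
      have hmem := Nat.sInf_mem (show {k : ℕ | g k = true}.Nonempty from hne)
      have : sInf {k : ℕ | g k = true} = k := by exact_mod_cast h
      rwa [this] at hmem
    · exact absurd h (by simp)
  | succ m =>
    rw [seqOf] at h
    unfold nextE at h
    split at h
    · next hne =>
      have hmem := Nat.sInf_mem
        (show {k : ℕ | seqOf g m < (k : ℕ∞) ∧ g k = true}.Nonempty from hne)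
      have : sInf {k : ℕ | seqOf g m < (k : ℕ∞) ∧ g k = true} = k := by exact_mod_cast h
      rw [this] at hmem
      exact hmem.2
    · exact absurd h (by simp)

lemma seqOf_surj (g : ℕ → Bool) : ∀ k : ℕ, g k = true → ∃ n, seqOf g n = (k : ℕ∞) := by
  intro k
  induction k using Nat.strong_induction_on with
  | _ k ih =>
    intro hk
    by_cases hex : ∃ j, j < k ∧ g j = true
    · classical
      set T := (Finset.range k).filter (fun j => g j = true) with hT
      have hTne : T.Nonempty := by
        obtain ⟨j, hj1, hj2⟩ := hex
        exact ⟨j, by simp [hT, hj1, hj2]⟩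
      set j := T.max' hTne with hj
      have hjmem : j ∈ T := T.max'_mem hTne
      have hjk : j < k := by simpa [hT] using (Finset.mem_filter.mp hjmem).1
      have hgj : g j = true := (Finset.mem_filter.mp hjmem).2
      obtain ⟨n, hn⟩ := ih j hjk hgj
      refine ⟨n + 1, ?_⟩
      rw [seqOf]
      unfold nextE
      have hkmem : k ∈ {k' : ℕ | seqOf g n < (k' : ℕ∞) ∧ g k' = true} := by
        refine ⟨?_, hk⟩
        rw [hn]
        exact_mod_cast hjk
      rw [dif_pos ⟨k, hkmem⟩]
      norm_cast
      refine le_antisymm (Nat.sInf_le hkmem) ?_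
      have hmem := Nat.sInf_mem (show Set.Nonempty _ from ⟨k, hkmem⟩)
      set m := sInf {k' : ℕ | seqOf g n < (k' : ℕ∞) ∧ g k' = true}
      by_contra hlt
      push_neg at hlt
      have hjm : j < m := by
        rw [hn] at hmem
        exact_mod_cast hmem.1
      have : m ∈ T := by simp [hT, hlt, hmem.2]
      exact absurd (Finset.le_max' T m this) (by omega)
    · push_neg at hex
      refine ⟨0, ?_⟩
      rw [seqOf, dif_pos ⟨k, hk⟩]
      norm_cast
      refine le_antisymm (Nat.sInf_le hk) ?_
      have hmem := Nat.sInf_mem (show {k' : ℕ | g k' = true}.Nonempty from ⟨k, hk⟩)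
      by_contra hlt
      push_neg at hlt
      exact hex _ hlt hmem

lemma toBoolSeq_seqOf (g : ℕ → Bool) : toBoolSeq (seqOf g) = g := by
  funext k
  cases h : g k with
  | false =>
    have hne : ¬ ∃ n, seqOf g n = (k : ℕ∞) := by
      rintro ⟨n, hn⟩
      rw [seqOf_spec g hn] at h
      simp at h
    rw [← Bool.not_eq_true, toBoolSeq_eq_true_iff]
    exact hne
  | true =>
    rw [toBoolSeq_eq_true_iff]
    exact seqOf_surj g k h

lemma toBoolSeq_bij : Set.BijOn toBoolSeq ZSet Set.univ := by
  refine ⟨fun _ _ => trivial, ZSetAux.inj, fun g _ => ⟨seqOf g, seqOf_mem g, toBoolSeq_seqOf g⟩⟩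

lemma isClosed_ZSet : IsClosed ZSet := by
  have : ZSet = ⋂ n : ℕ, {f : ℕ → ℕ∞ | f n + 1 ≤ f (n + 1)} := by
    ext f
    simp only [Set.mem_iInter, Set.mem_setOf_eq]
    exact mem_ZSet_iff f
  rw [this]
  refine isClosed_iInter fun n => ?_
  exact isClosed_le (by continuity) (by continuity)

lemma isCompact_ZSet : IsCompact ZSet := isClosed_ZSet.isCompact

lemma continuous_restrict :
    Continuous (fun f : ZSet => toBoolSeq f.1) := by
  refine continuous_pi fun k => ?_
  rw [continuous_discrete_rng]
  have key : ∀ f : ZSet, (toBoolSeq f.1 k = true ↔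
      f.1 ∈ ⋃ n ∈ Finset.range (k+1), (fun h : ℕ → ℕ∞ => h n) ⁻¹' {(k : ℕ∞)}) := by
    intro f
    rw [toBoolSeq_eq_true_iff]
    simp only [Set.mem_iUnion, Set.mem_preimage, Set.mem_singleton_iff, Finset.mem_range]
    constructor
    · rintro ⟨n, hn⟩
      exact ⟨n, Nat.lt_succ_of_le (ZSetAux.index_le f.2 hn), hn⟩
    · rintro ⟨n, _, hn⟩
      exact ⟨n, hn⟩
  have hU : IsOpen (⋃ n ∈ Finset.range (k+1), (fun h : ℕ → ℕ∞ => h n) ⁻¹' {(k : ℕ∞)}) := by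
    refine isOpen_biUnion fun n _ => ?_
    exact (ENat.isOpen_singleton (ENat.coe_ne_top k)).preimage (continuous_apply n)
  have hC : IsClosed (⋃ n ∈ Finset.range (k+1), (fun h : ℕ → ℕ∞ => h n) ⁻¹' {(k : ℕ∞)}) := by
    refine Set.Finite.isClosed_biUnion (Finset.range (k+1)).finite_toSet fun n _ => ?_
    exact isClosed_singleton.preimage (continuous_apply _)
  intro b
  cases b with
  | true =>
    have : (fun f : ZSet => toBoolSeq f.1 k) ⁻¹' {true}
        = Subtype.val ⁻¹' (⋃ n ∈ Finset.range (k+1), (fun h : ℕ → ℕ∞ => h n) ⁻¹' {(k : ℕ∞)}) := by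
      ext f
      simp only [Set.mem_preimage, Set.mem_singleton_iff]
      exact key f
    rw [this]
    exact hU.preimage continuous_subtype_val
  | false =>
    have : (fun f : ZSet => toBoolSeq f.1 k) ⁻¹' {false}
        = Subtype.val ⁻¹' (⋃ n ∈ Finset.range (k+1), (fun h : ℕ → ℕ∞ => h n) ⁻¹' {(k : ℕ∞)})ᶜ := by
      ext f
      simp only [Set.mem_preimage, Set.mem_singleton_iff, Set.mem_compl_iff]
      rw [← key f]
      cases hb : toBoolSeq f.1 k <;> simp
    rw [this]
    exact hC.isOpen_compl.preimage continuous_subtype_val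

theorem stmt7 :
    ZSet.Nonempty ∧ IsCompact ZSet ∧ Nonempty (ZSet ≃ₜ (ℕ → Bool)) := by
  refine ⟨⟨fun _ => ⊤, fun n => ⟨le_refl _, fun h => absurd h (lt_irrefl _)⟩⟩,
    isCompact_ZSet, ?_⟩
  have : CompactSpace ZSet := isCompact_iff_compactSpace.mp isCompact_ZSet
  have hbij : Function.Bijective (fun f : ZSet => toBoolSeq f.1) := by
    constructor
    · intro f g h
      exact Subtype.ext (ZSetAux.inj f.2 g.2 h)
    · intro g
      exact ⟨⟨seqOf g, seqOf_mem g⟩, toBoolSeq_seqOf g⟩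
  exact ⟨Continuous.homeoOfEquivCompactToT2 (f := Equiv.ofBijective _ hbij) continuous_restrict⟩
end

section
/- Let I be a finite set and let ε be a real number with 0 < ε < 1/2. Let A be a set of functions from 2^I to {0,1} (where 2^I denotes the set of functions I → {0,1}), and suppose |A| ≥ ε · 2^(2^|I|). Let Z = {s ∈ 2^I : there exists i ∈ {0,1} such that |{f ∈ A : f(s) = i}| < ε³ · 2^(2^|I|)}. Then |Z| ≤ 1/ε. -/
/-!
Suppose more than `1/ε` points are exceptional, and pick `k = ⌊1/ε⌋ + 1` of them, each with a
rare value `i s`. A function in `A` either takes a rare value at one of these points (fewer than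
`k ε³ 2^N` functions, `N = 2^|I|`) or takes the other value at all of them (at most `2^(N-k)`
functions). Hence `ε 2^N ≤ |A| < (2⁻ᵏ + k ε³) 2^N`, while `kε ≈ 1` and `ε < 1/2` give
`2⁻ᵏ + k ε³ ≤ ε`.
-/

lemma four_mul_le_two_pow {k : ℕ} (hk : 4 ≤ k) : 4 * k ≤ 2 ^ k := by
  induction k, hk using Nat.le_induction with
  | base => norm_num
  | succ k hk ih => rw [pow_succ]; omega

lemma inv_two_pow_add_mul_cube_le {ε : ℝ} {k : ℕ} (hε : ε < 1 / 2) (hkε : 1 < k * ε)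
    (hkε' : k * ε ≤ 1 + ε) : ((2 : ℝ) ^ k)⁻¹ + k * ε ^ 3 ≤ ε := by
  have hε0 : 0 < ε := by
    by_contra! h
    nlinarith [(Nat.cast_nonneg k : (0 : ℝ) ≤ k)]
  have hcube : (k : ℝ) * ε ^ 3 ≤ (1 + ε) * ε ^ 2 := by
    nlinarith [sq_nonneg ε]
  have hk3 : 3 ≤ k := by
    have : (2 : ℝ) < k := by nlinarith
    exact_mod_cast this
  rcases hk3.eq_or_lt with rfl | hk4
  · have : 1 / 3 < ε := by push_cast at hkε; linarith
    norm_num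
    nlinarith [mul_pos (sub_pos.2 this) (sub_pos.2 hε)]
  · have h2k : (4 : ℝ) * k ≤ 2 ^ k := by exact_mod_cast four_mul_le_two_pow hk4
    have hinv : ((2 : ℝ) ^ k)⁻¹ ≤ ε / 4 := by
      rw [inv_le_iff_one_le_mul₀ (by positivity)]
      nlinarith
    nlinarith

lemma ncard_setOf_eqOn_le {α : Type*} [Finite α] (T : Finset α) (g : α → Bool) :
    {f : α → Bool | Set.EqOn f g T}.ncard ≤ 2 ^ (Nat.card α - T.card) := by
  have hinj : Function.Injective
      (fun (f : {f : α → Bool | Set.EqOn f g T}) (a : ((T : Set α)ᶜ : Set α)) => f.1 a) := by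
    rintro ⟨f, hf⟩ ⟨f', hf'⟩ h
    ext a
    by_cases ha : a ∈ T
    · exact (hf ha).trans (hf' ha).symm
    · exact congrFun h ⟨a, ha⟩
  calc _ = Nat.card {f : α → Bool | Set.EqOn f g T} := (Nat.card_coe_set_eq _).symm
    _ ≤ Nat.card (((T : Set α)ᶜ : Set α) → Bool) := Nat.card_le_card_of_injective _ hinj
    _ = 2 ^ (Nat.card α - T.card) := by
      rw [Nat.card_fun, Nat.card_coe_set_eq, Set.ncard_compl, Set.ncard_coe_finset,
        Nat.card_eq_fintype_card (α := Bool), Fintype.card_bool]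

lemma ncard_le_two_pow_add_sum {α : Type*} [Finite α] (A : Set (α → Bool)) (T : Finset α)
    (i : α → Bool) :
    A.ncard ≤ 2 ^ (Nat.card α - T.card) + ∑ s ∈ T, {f ∈ A | f s = i s}.ncard := by
  have hcover :
      A ⊆ {f | Set.EqOn f (fun s => !i s) T} ∪ ⋃ s ∈ T, {f ∈ A | f s = i s} := by
    intro f hf
    by_cases h : ∃ s ∈ T, f s = i s
    · obtain ⟨s, hs, hfs⟩ := h
      exact Or.inr (Set.mem_biUnion hs ⟨hf, hfs⟩)
    · push Not at h
      exact Or.inl fun s hs => Bool.eq_not.2 (h s hs)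
  calc A.ncard ≤ _ := Set.ncard_le_ncard hcover
    _ ≤ _ := Set.ncard_union_le _ _
    _ ≤ _ := add_le_add (ncard_setOf_eqOn_le T _) (T.set_ncard_biUnion_le _)

theorem stmt8 {I : Type*} [Fintype I] (ε : ℝ) (hε0 : 0 < ε) (hε : ε < 1 / 2)
    (A : Set ((I → Bool) → Bool))
    (hA : ε * 2 ^ (2 ^ Fintype.card I) ≤ (A.ncard : ℝ)) :
    (({s : I → Bool | ∃ i : Bool,
        (({f ∈ A | f s = i}).ncard : ℝ) < ε ^ 3 * 2 ^ (2 ^ Fintype.card I)}).ncard : ℝ)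
      ≤ 1 / ε := by
  set N : ℕ := Nat.card (I → Bool)
  have hN : N = 2 ^ Fintype.card I := by simp [N, Nat.card_fun]
  rw [← hN] at hA ⊢
  set Z := {s : I → Bool | ∃ i : Bool, (({f ∈ A | f s = i}).ncard : ℝ) < ε ^ 3 * 2 ^ N}
  by_contra! hZ
  set k := ⌊1 / ε⌋₊ + 1
  have hkε : 1 < k * ε := by
    rw [← div_lt_iff₀ hε0]; push_cast [k]; exact Nat.lt_floor_add_one _
  have hkε' : k * ε ≤ 1 + ε :=
    calc (k : ℝ) * ε ≤ (1 / ε + 1) * ε := by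
          gcongr; push_cast [k]; gcongr; exact Nat.floor_le (by positivity)
      _ = 1 + ε := by field_simp
  obtain ⟨T, hTZ, hTk⟩ : ∃ T : Finset (I → Bool), ↑T ⊆ Z ∧ T.card = k := by
    have hk : k ≤ Z.toFinite.toFinset.card := by
      rw [← Set.ncard_eq_toFinset_card]
      exact Nat.floor_lt (by positivity) |>.2 hZ
    obtain ⟨T, hT, hTk⟩ := Finset.exists_subset_card_eq hk
    exact ⟨T, fun s hs => by simpa using hT hs, hTk⟩
  choose! i hi using fun s (hs : s ∈ T) => hTZ hs
  have hkN : k ≤ N := hTk ▸ Set.ncard_coe_finset T ▸ Set.ncard_le_card _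
  have hsum : (∑ s ∈ T, ({f ∈ A | f s = i s}.ncard : ℝ)) < k * (ε ^ 3 * 2 ^ N) := by
    calc _ < ∑ _s ∈ T, ε ^ 3 * 2 ^ N :=
          Finset.sum_lt_sum_of_nonempty (Finset.card_pos.1 (by omega)) hi
      _ = _ := by rw [Finset.sum_const, hTk, nsmul_eq_mul]
  have hcount : (A.ncard : ℝ) ≤
      ((2 : ℝ) ^ k)⁻¹ * 2 ^ N + ∑ s ∈ T, ({f ∈ A | f s = i s}.ncard : ℝ) := by
    rw [mul_comm, ← pow_sub₀ (2 : ℝ) two_ne_zero hkN, ← hTk]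
    exact_mod_cast ncard_le_two_pow_add_sum A T i
  have harith := mul_le_mul_of_nonneg_right (inv_two_pow_add_mul_cube_le hε hkε hkε')
    (by positivity : (0 : ℝ) ≤ 2 ^ N)
  linarith
end

section
/- Let Y be a Polish space and let 𝒥 be a collection of subsets of Y which contains every singleton, is closed under taking subsets, and is closed under countable unions. Define NON*(𝒥) = {X ⊆ ℝ : for every continuous function F : ℝ → Y, F''(X) ∈ 𝒥}, and non(𝒥) = min{|B| : B ⊆ Y and B ∉ 𝒥}. If NON*(𝒥) equals exactly the collection of countable subsets of ℝ, then there exists a subset of Y not in 𝒥, and non(𝒥) = ℵ₁. -/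
theorem stmt14 {Y : Type} [TopologicalSpace Y] [PolishSpace Y]
    (J : Set (Set Y))
    (hsingle : ∀ y : Y, {y} ∈ J)
    (hsub : ∀ A B : Set Y, A ⊆ B → B ∈ J → A ∈ J)
    (hunion : ∀ A : ℕ → Set Y, (∀ n, A n ∈ J) → (⋃ n, A n) ∈ J)
    (hNON : {X : Set ℝ | ∀ F : ℝ → Y, Continuous F → F '' X ∈ J}
            = {X : Set ℝ | X.Countable}) :
    (∃ B : Set Y, B ∉ J) ∧
    sInf {c : Cardinal | ∃ B : Set Y, B ∉ J ∧ Cardinal.mk B = c}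
      = Cardinal.aleph 1 := by
  -- get a subset X of ℝ of cardinality ℵ₁
  obtain ⟨X, hX⟩ : ∃ X : Set ℝ, Cardinal.mk X = Cardinal.aleph 1 :=
    Cardinal.le_mk_iff_exists_set.1
      (by rw [Cardinal.mk_real]; exact Cardinal.aleph_one_le_continuum)
  have hXu : ¬ X.Countable := by
    rw [Cardinal.countable_iff_lt_aleph_one, hX]
    exact lt_irrefl _
  have hXmem : X ∉ {X : Set ℝ | ∀ F : ℝ → Y, Continuous F → F '' X ∈ J} := by
    rw [hNON]; exact hXu
  simp only [Set.mem_setOf_eq, not_forall] at hXmem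
  obtain ⟨F, hF, hFX⟩ := hXmem
  -- countable sets belong to J
  have hc : ∀ B : Set Y, B.Countable → B ∈ J := by
    intro B hB
    rcases Set.eq_empty_or_nonempty B with rfl | hne
    · exact hsub ∅ {F 0} (Set.empty_subset _) (hsingle _)
    · obtain ⟨f, rfl⟩ := hB.exists_eq_range hne
      rw [Set.range_eq_iUnion]
      exact hunion _ fun n => hsingle (f n)
  have hB1 : Cardinal.mk (F '' X) = Cardinal.aleph 1 := by
    apply le_antisymm
    · rw [← hX]; exact Cardinal.mk_image_le
    · by_contra h
      exact hFX (hc _ ((Cardinal.countable_iff_lt_aleph_one _).2 (lt_of_not_ge h)))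
  constructor
  · exact ⟨F '' X, hFX⟩
  · apply le_antisymm
    · exact csInf_le (OrderBot.bddBelow _) ⟨F '' X, hFX, hB1⟩
    · refine le_csInf ⟨Cardinal.aleph 1, F '' X, hFX, hB1⟩ ?_
      rintro c ⟨B, hBJ, rfl⟩
      by_contra h
      exact hBJ (hc _ ((Cardinal.countable_iff_lt_aleph_one _).2 (lt_of_not_ge h)))
end

section
/- Let S be the collection of all strongly non-splitting families 𝒜 ⊆ [ℕ]^ℕ. Then S is a σ-ideal: it is closed under taking subsets, and if 𝒜_n ∈ S for every n ∈ ℕ then ⋃_n 𝒜_n ∈ S. -/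
/-- `A` splits the infinite set `C` if both `A ∩ C` and `C \ A` are infinite. -/
def Splits (A C : Set ℕ) : Prop := (A ∩ C).Infinite ∧ (C \ A).Infinite

/-- A family `𝒜` of subsets of `ℕ` is strongly non-splitting if every infinite
`B ⊆ ℕ` has an infinite subset `C` which is not split by any member of `𝒜`. -/
def StronglyNonSplitting (𝒜 : Set (Set ℕ)) : Prop :=
  ∀ B : Set ℕ, B.Infinite → ∃ C ⊆ B, C.Infinite ∧ ∀ A ∈ 𝒜, ¬ Splits A C

theorem stmt15 :
    -- closed under taking subsets
    (∀ 𝒜 ℬ : Set (Set ℕ), (∀ A ∈ ℬ, A.Infinite) → 𝒜 ⊆ ℬ →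
      StronglyNonSplitting ℬ → StronglyNonSplitting 𝒜) ∧
    -- closed under countable unions
    (∀ 𝒜 : ℕ → Set (Set ℕ), (∀ n, ∀ A ∈ 𝒜 n, A.Infinite) →
      (∀ n, StronglyNonSplitting (𝒜 n)) → StronglyNonSplitting (⋃ n, 𝒜 n)) := by
  constructor
  · intro 𝒜 ℬ _ hsub hB B hBinf
    obtain ⟨C, hCB, hCinf, hC⟩ := hB B hBinf
    exact ⟨C, hCB, hCinf, fun A hA => hC A (hsub hA)⟩
  · intro 𝒜 _ h B hBinf
    -- choose a refinement function
    choose F hFsub hFinf hFns using fun n (S : {S : Set ℕ // S.Infinite}) => h n S.1 S.2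
    -- the decreasing chain
    let G : ℕ → {S : Set ℕ // S.Infinite} := fun n =>
      Nat.rec ⟨F 0 ⟨B, hBinf⟩, hFinf 0 ⟨B, hBinf⟩⟩
        (fun n p => ⟨F (n + 1) p, hFinf (n + 1) p⟩) n
    have hGsucc : ∀ n, (G (n + 1)).1 ⊆ (G n).1 := fun n => hFsub (n + 1) (G n)
    have hGns : ∀ n, ∀ A ∈ 𝒜 n, ¬Splits A (G n).1 := by
      intro n
      cases n with
      | zero => exact hFns 0 ⟨B, hBinf⟩
      | succ m => exact hFns (m + 1) (G m)
    have hGB : ∀ n, (G n).1 ⊆ B := by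
      intro n
      induction n with
      | zero => exact hFsub 0 ⟨B, hBinf⟩
      | succ m ih => exact (hGsucc m).trans ih
    have hGmono : ∀ m n, m ≤ n → (G n).1 ⊆ (G m).1 := by
      intro m n hmn
      induction hmn with
      | refl => exact subset_rfl
      | step h ih => exact (hGsucc _).trans ih
    -- diagonal sequence
    have hpick : ∀ (n b : ℕ), ∃ c, c ∈ (G n).1 ∧ b < c := by
      intro n b
      obtain ⟨c, hc, hbc⟩ := (G n).2.exists_gt b
      exact ⟨c, hc, hbc⟩
    choose pick hmem hgt using hpick
    let x : ℕ → ℕ := fun n => Nat.rec (pick 0 0) (fun n xn => pick (n + 1) xn) n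
    have hx_mem : ∀ n, x n ∈ (G n).1 := by
      intro n
      cases n with
      | zero => exact hmem 0 0
      | succ m => exact hmem (m + 1) (x m)
    have hx_lt : ∀ n, x n < x (n + 1) := fun n => hgt (n + 1) (x n)
    have hx_mono : StrictMono x := strictMono_nat_of_lt_succ hx_lt
    refine ⟨Set.range x, ?_, Set.infinite_range_of_injective hx_mono.injective, ?_⟩
    · rintro _ ⟨n, rfl⟩
      exact hGB n (hx_mem n)
    · rintro A hA ⟨h1, h2⟩
      obtain ⟨n, hAn⟩ := Set.mem_iUnion.mp hA
      have hDsub : ∀ m, x m ∈ (G n).1 ∪ x '' Set.Iio n := by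
        intro m
        rcases lt_or_ge m n with hmn | hnm
        · exact Or.inr ⟨m, hmn, rfl⟩
        · exact Or.inl (hGmono n m hnm (hx_mem m))
      have hfinIm : (x '' Set.Iio n).Finite := (Set.finite_Iio n).image x
      rcases not_and_or.mp (hGns n A hAn) with hfin | hfin
      · apply h1
        apply ((Set.not_infinite.mp hfin).union hfinIm).subset
        rintro a ⟨haA, m, rfl⟩
        rcases hDsub m with hc | hc
        · exact Or.inl ⟨haA, hc⟩
        · exact Or.inr hc
      · apply h2
        apply ((Set.not_infinite.mp hfin).union hfinIm).subset
        rintro a ⟨⟨m, rfl⟩, haA⟩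
        rcases hDsub m with hc | hc
        · exact Or.inl ⟨hc, haA⟩
        · exact Or.inr hc
end
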